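/- Let F₀, F₁ : U → ℝ^k be feature maps on the grid U = ZMod Q × ZMod M such that F̂₁(ω)*F̂₀(ω) ≠ 0 for every ω ∈ U, and let G : U → ℂ^k be the channelwise inverse discrete Fourier transform of Ĝ(ω) = F̂₁(ω) · (F̂₁(ω)*F̂₀(ω)) / |F̂₁(ω)*F̂₀(ω)|. Then G is real-valued: Im(G(p,n)) = 0 for every p ∈ U and every channel 1 ≤ n ≤ k. -/

import Mathlib

/-!
Both F̂₀ and F̂₁ are transforms of real signals, so F̂ᵢ(-ω) = conj F̂ᵢ(ω); the normalising factor
|F̂₁(ω)*F̂₀(ω)| is real, hence Ĝ(-ω) = conj Ĝ(ω). Conjugating the inverse transform of such a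
Hermitian-symmetric spectrum and reindexing by ω ↦ -ω returns the same sum, so it is real.
Writing the Fourier kernel through `ZMod.stdAddChar` turns conjugation into negation of ω.
-/

open Finset Complex

/-- The discrete Fourier transform of `g : ZMod Q × ZMod M → ℂ`. -/
noncomputable def dft (Q M : ℕ) [NeZero Q] [NeZero M]
    (g : ZMod Q × ZMod M → ℂ) (ω : ZMod Q × ZMod M) : ℂ :=
  ∑ p : ZMod Q × ZMod M, g p *
    Complex.exp (-(2 * Real.pi * Complex.I) *
      (((ω.1.val * p.1.val : ℕ) : ℂ) / (Q : ℂ) + ((ω.2.val * p.2.val : ℕ) : ℂ) / (M : ℂ)))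

/-- The channelwise DFT of a real feature map `F : U → ℝ^k`. -/
noncomputable def cdft (Q M : ℕ) [NeZero Q] [NeZero M] {k : ℕ}
    (F : ZMod Q × ZMod M → Fin k → ℝ) (ω : ZMod Q × ZMod M) (n : Fin k) : ℂ :=
  dft Q M (fun p => ((F p n : ℝ) : ℂ)) ω

/-- The inverse discrete Fourier transform of `h : ZMod Q × ZMod M → ℂ`. -/
noncomputable def idft (Q M : ℕ) [NeZero Q] [NeZero M]
    (h : ZMod Q × ZMod M → ℂ) (p : ZMod Q × ZMod M) : ℂ :=
  (∑ ω : ZMod Q × ZMod M, h ω *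
    Complex.exp ((2 * Real.pi * Complex.I) *
      (((ω.1.val * p.1.val : ℕ) : ℂ) / (Q : ℂ) + ((ω.2.val * p.2.val : ℕ) : ℂ) / (M : ℂ)))) /
    ((Q * M : ℕ) : ℂ)

/-- Hermitian inner product `a*b = Σ_n conj(a_n)·b_n` on `ℂ^k`. -/
noncomputable def cinner {k : ℕ} (a b : Fin k → ℂ) : ℂ :=
  ∑ n : Fin k, (starRingEnd ℂ) (a n) * b n

/-- The optimal-transport mixed spectrum
`Ĝ(ω) = F̂₁(ω)·(F̂₁(ω)*F̂₀(ω))/|F̂₁(ω)*F̂₀(ω)|`. -/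
noncomputable def Ghat (Q M : ℕ) [NeZero Q] [NeZero M] {k : ℕ}
    (F₀ F₁ : ZMod Q × ZMod M → Fin k → ℝ) (ω : ZMod Q × ZMod M) (n : Fin k) : ℂ :=
  cdft Q M F₁ ω n * cinner (cdft Q M F₁ ω) (cdft Q M F₀ ω) /
    ((‖cinner (cdft Q M F₁ ω) (cdft Q M F₀ ω)‖ : ℝ) : ℂ)

section GridCharacter

variable {Q M : ℕ} [NeZero Q] [NeZero M]

noncomputable def gridChar (ω p : ZMod Q × ZMod M) : ℂ :=
  ZMod.stdAddChar (ω.1 * p.1) * ZMod.stdAddChar (ω.2 * p.2)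

lemma exp_two_pi_I_mul_val_mul_val_div {d : ℕ} [NeZero d] (a b : ZMod d) :
    Complex.exp (2 * Real.pi * Complex.I * (((a.val * b.val : ℕ) : ℂ) / d)) =
      ZMod.stdAddChar (a * b) := by
  have hab : a * b = ((a.val * b.val : ℕ) : ℤ) := by simp
  rw [hab, ZMod.stdAddChar_coe, mul_div_assoc]
  push_cast
  rfl

lemma exp_two_pi_I_mul_phase_eq_gridChar (ω p : ZMod Q × ZMod M) :
    Complex.exp ((2 * Real.pi * Complex.I) *
      (((ω.1.val * p.1.val : ℕ) : ℂ) / (Q : ℂ) + ((ω.2.val * p.2.val : ℕ) : ℂ) / (M : ℂ))) =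
      gridChar ω p := by
  rw [mul_add, Complex.exp_add, exp_two_pi_I_mul_val_mul_val_div,
    exp_two_pi_I_mul_val_mul_val_div, gridChar]

lemma conj_gridChar (ω p : ZMod Q × ZMod M) :
    starRingEnd ℂ (gridChar ω p) = gridChar (-ω) p := by
  simp only [gridChar, map_mul, ← AddChar.map_neg_eq_conj, Prod.fst_neg, Prod.snd_neg, neg_mul]

lemma exp_neg_two_pi_I_mul_phase_eq_gridChar (ω p : ZMod Q × ZMod M) :
    Complex.exp (-(2 * Real.pi * Complex.I) *
      (((ω.1.val * p.1.val : ℕ) : ℂ) / (Q : ℂ) + ((ω.2.val * p.2.val : ℕ) : ℂ) / (M : ℂ))) =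
      gridChar (-ω) p := by
  rw [← conj_gridChar, ← exp_two_pi_I_mul_phase_eq_gridChar, ← Complex.exp_conj]
  simp only [map_mul, map_add, map_div₀, map_natCast, map_ofNat, Complex.conj_ofReal,
    Complex.conj_I]
  ring_nf

lemma dft_eq_sum_gridChar (g : ZMod Q × ZMod M → ℂ) (ω : ZMod Q × ZMod M) :
    dft Q M g ω = ∑ p, g p * gridChar (-ω) p := by
  simp only [dft, exp_neg_two_pi_I_mul_phase_eq_gridChar]

lemma idft_eq_sum_gridChar (h : ZMod Q × ZMod M → ℂ) (p : ZMod Q × ZMod M) :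
    idft Q M h p = (∑ ω, h ω * gridChar ω p) / ((Q * M : ℕ) : ℂ) := by
  simp only [idft, exp_two_pi_I_mul_phase_eq_gridChar]

end GridCharacter

section HermitianSymmetry

variable {Q M : ℕ} [NeZero Q] [NeZero M]

lemma conj_dft (g : ZMod Q × ZMod M → ℂ) (ω : ZMod Q × ZMod M) :
    starRingEnd ℂ (dft Q M g ω) = dft Q M (fun p => starRingEnd ℂ (g p)) (-ω) := by
  simp only [dft_eq_sum_gridChar, map_sum, map_mul, conj_gridChar]

lemma conj_cdft {k : ℕ} (F : ZMod Q × ZMod M → Fin k → ℝ) (ω : ZMod Q × ZMod M) (n : Fin k) :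
    starRingEnd ℂ (cdft Q M F ω n) = cdft Q M F (-ω) n := by
  simp only [cdft, conj_dft, Complex.conj_ofReal]

lemma conj_cinner {k : ℕ} (a b : Fin k → ℂ) :
    starRingEnd ℂ (cinner a b) =
      cinner (fun n => starRingEnd ℂ (a n)) (fun n => starRingEnd ℂ (b n)) := by
  simp only [cinner, map_sum, map_mul]

lemma conj_Ghat {k : ℕ} (F₀ F₁ : ZMod Q × ZMod M → Fin k → ℝ) (ω : ZMod Q × ZMod M)
    (n : Fin k) :
    starRingEnd ℂ (Ghat Q M F₀ F₁ ω n) = Ghat Q M F₀ F₁ (-ω) n := by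
  have hcinner : cinner (cdft Q M F₁ (-ω)) (cdft Q M F₀ (-ω)) =
      starRingEnd ℂ (cinner (cdft Q M F₁ ω) (cdft Q M F₀ ω)) := by
    simp only [conj_cinner, conj_cdft]
  simp only [Ghat, map_div₀, map_mul, Complex.conj_ofReal, conj_cdft, hcinner, Complex.norm_conj]

lemma im_idft_eq_zero_of_conj_eq_comp_neg {h : ZMod Q × ZMod M → ℂ}
    (hh : ∀ ω, starRingEnd ℂ (h ω) = h (-ω)) (p : ZMod Q × ZMod M) :
    (idft Q M h p).im = 0 := by
  rw [← Complex.conj_eq_iff_im, idft_eq_sum_gridChar, map_div₀, map_natCast, map_sum]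
  congr 1
  calc ∑ ω, starRingEnd ℂ (h ω * gridChar ω p)
      = ∑ ω, h (-ω) * gridChar (-ω) p := by simp only [map_mul, hh, conj_gridChar]
    _ = ∑ ω, h ω * gridChar ω p := Equiv.sum_comp (Equiv.neg _) (fun ω => h ω * gridChar ω p)

end HermitianSymmetry

theorem idft_Ghat_real_general (Q M : ℕ) [NeZero Q] [NeZero M] {k : ℕ}
    (F₀ F₁ : ZMod Q × ZMod M → Fin k → ℝ)
    (p : ZMod Q × ZMod M) (n : Fin k) :
    (idft Q M (fun ω => Ghat Q M F₀ F₁ ω n) p).im = 0 :=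
  im_idft_eq_zero_of_conj_eq_comp_neg (fun ω => conj_Ghat F₀ F₁ ω n) p

/-- The channelwise inverse DFT of the mixed spectrum `Ĝ` is real-valued. -/
theorem idft_Ghat_real (Q M : ℕ) [NeZero Q] [NeZero M] {k : ℕ}
    (F₀ F₁ : ZMod Q × ZMod M → Fin k → ℝ)
    (h : ∀ ω : ZMod Q × ZMod M, cinner (cdft Q M F₁ ω) (cdft Q M F₀ ω) ≠ 0)
    (p : ZMod Q × ZMod M) (n : Fin k) :
    (idft Q M (fun ω => Ghat Q M F₀ F₁ ω n) p).im = 0 :=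
  idft_Ghat_real_general Q M F₀ F₁ p n
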